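/- arXiv:1909.06578 — 6 statements merged into one kernel-verified Lean document; each statement's English description precedes it below -/
import Mathlib

section
/- If T is a tree on n vertices containing a perfect matching, then 2 is an eigenvalue of the Laplacian matrix L(T), and in the nonincreasing ordering of Laplacian eigenvalues, μ_{n/2}(T) = 2. -/
open Polynomial
open scoped Classical

open Finset Matrix

/-!
Let `f` be the partner map of the perfect matching, so that `n = 2a`, the matching has `a` edges
and the tree has `a - 1` further edges. Splitting off the matching terms,
`xᵀ L x = ½ ∑ᵢ (xᵢ - x_{f i})² + ½ ∑ (non-matching edge terms)`.
Where `x` is constant along every non-matching edge (at most `a - 1` linear conditions),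
this gives `xᵀ L x ≤ 2 ‖x‖²`; where `xᵢ + x_{f i} = 0` for all `i` (at most `a` conditions),
it gives `xᵀ L x ≥ 2 ‖x‖²`. A subspace on which the quadratic form is `≤ c ‖x‖²` meets the span of the
eigenvectors with eigenvalue `> c` trivially, so at most `a - 1` eigenvalues exceed `2` and at most
`a` lie below `2`. Hence the `a`-th largest eigenvalue is `2`.
-/

theorem Orthonormal.card_le_of_inner_map_le {E κ ι : Type*} [NormedAddCommGroup E]
    [InnerProductSpace ℝ E] [Fintype κ] [Fintype ι] {T : E →ₗ[ℝ] E} {Φ : E →ₗ[ℝ] κ → ℝ} {c : ℝ}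
    (hΦ : ∀ x, Φ x = 0 → inner ℝ (T x) x ≤ c * inner ℝ x x)
    {v : ι → E} (hv : Orthonormal ℝ v) {ev : ι → ℝ} (hTv : ∀ i, T (v i) = ev i • v i)
    (hev : ∀ i, c < ev i) :
    Fintype.card ι ≤ Fintype.card κ := by
  by_contra! hlt
  have hker : LinearMap.ker (Φ ∘ₗ Fintype.linearCombination ℝ v) ≠ ⊥ :=
    LinearMap.ker_ne_bot_of_finrank_lt (by simpa using hlt)
  obtain ⟨b, hb, hb0⟩ := Submodule.exists_mem_ne_zero_of_ne_bot hker
  obtain ⟨i₀, hi₀⟩ : ∃ i, b i ≠ 0 := Function.ne_iff.mp hb0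
  have hTx : T (∑ i, b i • v i) = ∑ i, (ev i * b i) • v i := by
    simp only [map_sum, map_smul, hTv, smul_smul, mul_comm]
  have key := hΦ (∑ i, b i • v i) (by
    simpa only [LinearMap.mem_ker, LinearMap.comp_apply, Fintype.linearCombination_apply] using hb)
  rw [hTx, hv.inner_sum, hv.inner_sum, mul_sum] at key
  refine key.not_gt (sum_lt_sum (fun i _ => ?_) ⟨i₀, mem_univ _, ?_⟩)
  · simp only [RCLike.conj_to_real]
    nlinarith [hev i, mul_self_nonneg (b i)]
  · simp only [RCLike.conj_to_real]
    nlinarith [hev i₀, mul_self_pos.mpr hi₀]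

namespace Matrix.IsHermitian

variable {V κ : Type*} [Fintype V] [DecidableEq V] [Fintype κ] {A : Matrix V V ℝ}
  {Φ : (V → ℝ) →ₗ[ℝ] κ → ℝ} {c : ℝ}

theorem toEuclideanLin_eigenvectorBasis (hA : A.IsHermitian) (i : V) :
    toEuclideanLin A (hA.eigenvectorBasis i) = hA.eigenvalues i • hA.eigenvectorBasis i :=
  WithLp.ofLp_injective 2 (hA.mulVec_eigenvectorBasis i)

theorem card_lt_eigenvalues_le (hA : A.IsHermitian)
    (hΦ : ∀ x, Φ x = 0 → x ⬝ᵥ A *ᵥ x ≤ c * (x ⬝ᵥ x)) :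
    #{i | c < hA.eigenvalues i} ≤ Fintype.card κ := by
  rw [← Fintype.card_subtype]
  exact Orthonormal.card_le_of_inner_map_le (T := toEuclideanLin A)
    (Φ := Φ ∘ₗ (WithLp.linearEquiv 2 ℝ (V → ℝ)).toLinearMap) (fun x => hΦ x)
    (hA.eigenvectorBasis.orthonormal.comp _ Subtype.val_injective)
    (fun i => hA.toEuclideanLin_eigenvectorBasis i) (fun i => i.2)

theorem card_eigenvalues_lt_le (hA : A.IsHermitian)
    (hΦ : ∀ x, Φ x = 0 → c * (x ⬝ᵥ x) ≤ x ⬝ᵥ A *ᵥ x) :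
    #{i | hA.eigenvalues i < c} ≤ Fintype.card κ := by
  rw [← Fintype.card_subtype]
  refine Orthonormal.card_le_of_inner_map_le (T := -toEuclideanLin A) (c := -c)
    (Φ := Φ ∘ₗ (WithLp.linearEquiv 2 ℝ (V → ℝ)).toLinearMap) (fun x hx => ?_)
    (hA.eigenvectorBasis.orthonormal.comp _ Subtype.val_injective)
    (fun i => ?_) (fun i => neg_lt_neg i.2)
  · rw [LinearMap.neg_apply, inner_neg_left, neg_mul, neg_le_neg_iff]
    exact hΦ _ hx
  · simp [hA.toEuclideanLin_eigenvectorBasis]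

end Matrix.IsHermitian

theorem card_filter_eq_of_prod_X_sub_C_eq {R ι ι' : Type*} [CommRing R] [IsDomain R] [Fintype ι]
    [Fintype ι'] {μ : ι → R} {ν : ι' → R} (h : ∏ i, (X - C (μ i)) = ∏ i, (X - C (ν i)))
    (p : R → Prop) [DecidablePred p] :
    #{i | p (μ i)} = #{i | p (ν i)} := by
  have hroots : univ.val.map μ = univ.val.map ν := by
    simpa [roots_prod, prod_ne_zero_iff, X_sub_C_ne_zero] using congrArg roots h
  calc #{i | p (μ i)} = (univ.val.map μ).countP p := by rw [Multiset.countP_map]; rfl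
    _ = (univ.val.map ν).countP p := by rw [hroots]
    _ = #{i | p (ν i)} := by rw [Multiset.countP_map]; rfl

theorem Antitone.eq_of_card_filter_le {α : Type*} [LinearOrder α] {n : ℕ} {μ : Fin n → α}
    (hμ : Antitone μ) {c : α} (i : Fin n) (hgt : #{j | c < μ j} ≤ i)
    (hlt : #{j | μ j < c} + i < n) : μ i = c := by
  rcases lt_trichotomy (μ i) c with h | h | h
  · have := card_le_card fun j (hj : j ∈ Ici i) =>
      mem_filter.2 ⟨mem_univ _, (hμ (mem_Ici.1 hj)).trans_lt h⟩
    rw [Fin.card_Ici] at this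
    omega
  · exact h
  · have := card_le_card fun j (hj : j ∈ Iic i) =>
      mem_filter.2 ⟨mem_univ _, h.trans_le (hμ (mem_Iic.1 hj))⟩
    rw [Fin.card_Iic] at this
    omega

namespace SimpleGraph

variable {V R : Type*} [Fintype V] [DecidableEq V] (G : SimpleGraph V) [DecidableRel G.Adj]
  {f : V → V}

theorem dotProduct_lapMatrix_mulVec_eq [Field R] [CharZero R] (x : V → R)
    (hf : ∀ v, G.Adj v (f v)) :
    x ⬝ᵥ G.lapMatrix R *ᵥ x = (∑ i, (x i - x (f i)) ^ 2 +
      ∑ i, ∑ j, if G.Adj i j ∧ j ≠ f i then (x i - x j) ^ 2 else 0) / 2 := by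
  rw [← toLinearMap₂'_apply', lapMatrix_toLinearMap₂', ← sum_add_distrib]
  congr 1
  refine sum_congr rfl fun i _ => ?_
  calc (∑ j, if G.Adj i j then (x i - x j) ^ 2 else 0)
      = ∑ j, ((if j = f i then (x i - x j) ^ 2 else 0) +
          if G.Adj i j ∧ j ≠ f i then (x i - x j) ^ 2 else 0) :=
        sum_congr rfl fun j _ => by by_cases h : j = f i <;> simp [h, hf i]
    _ = _ := by rw [sum_add_distrib, Fintype.sum_ite_eq']

variable [Field R] [LinearOrder R] [IsStrictOrderedRing R] (x : V → R)

theorem dotProduct_lapMatrix_mulVec_le (hf : ∀ v, G.Adj v (f v)) (hinv : Function.Involutive f)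
    (hx : ∀ i j, G.Adj i j → j ≠ f i → x i = x j) :
    x ⬝ᵥ G.lapMatrix R *ᵥ x ≤ 2 * (x ⬝ᵥ x) := by
  have hzero : (∑ i, ∑ j, if G.Adj i j ∧ j ≠ f i then (x i - x j) ^ 2 else 0) = 0 :=
    sum_eq_zero fun i _ => sum_eq_zero fun j _ => by
      split_ifs with h
      · rw [hx i j h.1 h.2, sub_self, sq, zero_mul]
      · rfl
  have hsq : ∑ i, x (f i) ^ 2 = ∑ i, x i ^ 2 := hinv.bijective.sum_comp (fun v => x v ^ 2)
  have hmatched : ∑ i, (x i - x (f i)) ^ 2 ≤ ∑ i, 2 * (x i ^ 2 + x (f i) ^ 2) :=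
    sum_le_sum fun i _ => by nlinarith [sq_nonneg (x i + x (f i))]
  rw [G.dotProduct_lapMatrix_mulVec_eq x hf, hzero, dotProduct]
  simp only [← mul_sum, sum_add_distrib, hsq] at hmatched
  simp only [← sq]
  linarith

theorem two_mul_dotProduct_le_dotProduct_lapMatrix_mulVec (hf : ∀ v, G.Adj v (f v))
    (hx : ∀ i, x i + x (f i) = 0) :
    2 * (x ⬝ᵥ x) ≤ x ⬝ᵥ G.lapMatrix R *ᵥ x := by
  have hnonneg : 0 ≤ ∑ i, ∑ j, if G.Adj i j ∧ j ≠ f i then (x i - x j) ^ 2 else 0 :=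
    sum_nonneg fun i _ => sum_nonneg fun j _ => by split_ifs <;> positivity
  have hsq : ∑ i, (x i - x (f i)) ^ 2 = 4 * ∑ i, x i ^ 2 := by
    rw [mul_sum]
    exact sum_congr rfl fun i _ => by rw [show x (f i) = -x i by linarith [hx i]]; ring
  rw [G.dotProduct_lapMatrix_mulVec_eq x hf, hsq, dotProduct]
  simp only [← sq]
  linarith

end SimpleGraph

namespace Sym2

variable {V R : Type*} [Ring R]

-- Each edge is oriented arbitrarily by `Quot.out`; only the kernel of these maps matters.
noncomputable def edgeDifferences (s : Set (Sym2 V)) : (V → R) →ₗ[R] s → R where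
  toFun x e := x e.1.out.1 - x e.1.out.2
  map_add' _ _ := funext fun _ => add_sub_add_comm ..
  map_smul' _ _ := funext fun _ => (mul_sub ..).symm

noncomputable def edgeSums (s : Set (Sym2 V)) : (V → R) →ₗ[R] s → R where
  toFun x e := x e.1.out.1 + x e.1.out.2
  map_add' _ _ := funext fun _ => add_add_add_comm ..
  map_smul' _ _ := funext fun _ => (mul_add ..).symm

theorem out_eq_or_eq_swap (u v : V) : (s(u, v)).out = (u, v) ∨ (s(u, v)).out = (v, u) := by
  have h : s((s(u, v)).out.1, (s(u, v)).out.2) = s(u, v) := Quot.out_eq _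
  rcases Sym2.eq_iff.mp h with ⟨h1, h2⟩ | ⟨h1, h2⟩
  · exact Or.inl (Prod.ext h1 h2)
  · exact Or.inr (Prod.ext h1 h2)

theorem eq_of_edgeDifferences_eq_zero {s : Set (Sym2 V)} {x : V → R}
    (hx : edgeDifferences s x = 0) {u v : V} (huv : s(u, v) ∈ s) : x u = x v := by
  have := congrFun hx ⟨_, huv⟩
  rcases out_eq_or_eq_swap u v with h | h
  · simpa [edgeDifferences, h, sub_eq_zero] using this
  · simpa [edgeDifferences, h, sub_eq_zero, eq_comm] using this

theorem add_eq_zero_of_edgeSums_eq_zero {s : Set (Sym2 V)} {x : V → R} (hx : edgeSums s x = 0)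
    {u v : V} (huv : s(u, v) ∈ s) : x u + x v = 0 := by
  have := congrFun hx ⟨_, huv⟩
  rcases out_eq_or_eq_swap u v with h | h
  · simpa [edgeSums, h] using this
  · simpa [edgeSums, h, add_comm] using this

end Sym2

namespace SimpleGraph.Subgraph

variable {V : Type*} {G : SimpleGraph V} {M : G.Subgraph}

theorem IsPerfectMatching.exists_involutive (hM : M.IsPerfectMatching) :
    ∃ f : V → V, Function.Involutive f ∧ ∀ v w, M.Adj v w ↔ w = f v := by
  choose f hf huniq using isPerfectMatching_iff.mp hM
  exact ⟨f, fun v => (huniq _ _ (hf v).symm).symm, fun v w => ⟨huniq v w, fun h => h ▸ hf v⟩⟩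

theorem IsPerfectMatching.two_mul_card_edgeSet [Fintype V] [Fintype M.edgeSet]
    (hM : M.IsPerfectMatching) : 2 * Fintype.card M.edgeSet = Fintype.card V := by
  have := M.spanningCoe.sum_degrees_eq_twice_card_edges
  simp only [degree_spanningCoe, isPerfectMatching_iff_forall_degree.mp hM] at this
  rw [sum_const, card_univ, smul_eq_mul, mul_one, ← card_edgeSet] at this
  rw [this]
  congr 1
  exact Fintype.card_congr (Equiv.setCongr M.edgeSet_spanningCoe)

end SimpleGraph.Subgraph

/-- If `T` is a tree on `n` vertices with a perfect matching, then `2` is a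
Laplacian eigenvalue of `T`, and in the nonincreasing listing `μ` of the Laplacian
eigenvalues (with multiplicity), `μ_{n/2} = 2` (0-indexed: `μ (n/2 - 1) = 2`). -/
theorem tree_perfect_matching_lap_eigenvalue_two {n : ℕ} {V : Type*} [Fintype V] [DecidableEq V]
    (hn : Fintype.card V = n)
    (T : SimpleGraph V) (hT : T.IsTree)
    (M : T.Subgraph) (hM : M.IsPerfectMatching)
    (μ : Fin n → ℝ) (hμ : Antitone μ)
    (hfac : (Matrix.charpoly (T.lapMatrix ℝ)) = ∏ i : Fin n, (X - C (μ i))) :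
    (∃ i : Fin n, μ i = 2) ∧ ∀ i : Fin n, (i : ℕ) + 1 = n / 2 → μ i = 2 := by
  obtain ⟨f, hf, hMf⟩ := hM.exists_involutive
  have hTf : ∀ v, T.Adj v (f v) := fun v => M.adj_sub ((hMf v _).2 rfl)
  have hL := T.isHermitian_lapMatrix ℝ
  have hgt : #{i | 2 < hL.eigenvalues i} ≤ Fintype.card ↥(T.edgeSet \ M.edgeSet) :=
    hL.card_lt_eigenvalues_le (Φ := Sym2.edgeDifferences _) fun x hx =>
      T.dotProduct_lapMatrix_mulVec_le x hTf hf fun i j hij hj =>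
        Sym2.eq_of_edgeDifferences_eq_zero hx ⟨hij, fun hM' => hj ((hMf i j).1 hM')⟩
  have hlt : #{i | hL.eigenvalues i < 2} ≤ Fintype.card M.edgeSet :=
    hL.card_eigenvalues_lt_le (Φ := Sym2.edgeSums _) fun x hx =>
      T.two_mul_dotProduct_le_dotProduct_lapMatrix_mulVec x hTf fun i =>
        Sym2.add_eq_zero_of_edgeSums_eq_zero hx ((hMf i _).2 rfl)
  have hmatch := hM.two_mul_card_edgeSet
  have hedges : Fintype.card ↥(T.edgeSet \ M.edgeSet) + Fintype.card M.edgeSet + 1 = n := by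
    rw [← hn, ← hT.card_edgeFinset, ← SimpleGraph.card_edgeSet]
    simp only [← Nat.card_eq_fintype_card, Nat.card_coe_set_eq]
    rw [Set.ncard_sdiff_add_ncard_of_subset M.edgeSet_subset]
  have hchar : (T.lapMatrix ℝ).charpoly = ∏ i, (X - C (hL.eigenvalues i)) := by
    simpa using hL.charpoly_eq
  have hcount := card_filter_eq_of_prod_X_sub_C_eq (hfac.symm.trans hchar)
  have hmid : ∀ i : Fin n, (i : ℕ) + 1 = n / 2 → μ i = 2 := fun i hi =>
    hμ.eq_of_card_filter_le i (by rw [hcount (2 < ·)]; omega) (by rw [hcount (· < 2)]; omega)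
  exact ⟨⟨⟨n / 2 - 1, by omega⟩, hmid _ (Nat.sub_add_cancel (by omega))⟩, hmid⟩
end

section
/- Let T be a tree with a perfect matching M. A nonzero vector X is an eigenvector of the Laplacian L(T) for the eigenvalue 2 if and only if X has exactly two distinct entries t and −t for some t ≠ 0, with x(u) = −x(v) for every matching edge uv ∈ M and x(u) = x(v) for every non-matching edge uv ∉ M. -/
/-!
Write `σ(v, u) X v` for `-X v` if `vu ∈ M` and `X v` otherwise. Since every vertex has exactly
one `M`-neighbour, `((L - 2) X) v = ∑_{u ∼ v} (σ(v, u) X v - X u)`, so `X` is an eigenvector for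
`2` iff these edge defects sum to zero around every vertex. The defects vanish on an edge from
either side simultaneously, so the edges with non-zero defect form a subforest of `T` without
leaves: there a vertex with a single such edge would have a non-zero sum. A leafless finite
forest has no edges, so `X v = σ(v, u) X u` on every edge, and `|X|` is constant on the tree.
-/

open scoped Classical

open Finset

namespace SimpleGraph

variable {V : Type*} {G : SimpleGraph V}

-- The last vertex of a longest path is a leaf.
theorem IsAcyclic.eq_bot_of_forall_degree_ne_one [Finite V] [G.LocallyFinite]
    (hG : G.IsAcyclic) (h : ∀ v, G.degree v ≠ 1) : G = ⊥ := by
  by_contra hne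
  obtain ⟨x, y, hxy⟩ : ∃ x y, G.Adj x y := by
    simpa [eq_bot_iff_forall_not_adj] using hne
  have : Nonempty V := ⟨x⟩
  obtain ⟨u, v, p, hp, hmax⟩ := Walk.exists_isPath_forall_isPath_length_le_length G
  have hnil : ¬p.Nil := by
    intro hpnil
    have := hmax x y hxy.toWalk (Walk.IsPath.mk' (by simp [hxy.ne]))
    simp [Walk.length_eq_zero_iff.mpr hpnil] at this
  refine h v (degree_eq_one_iff_existsUnique_adj.mpr
    ⟨_, (p.adj_penultimate hnil).symm, fun w hvw => hG.eq_penultimate_of_adj_end hp hvw ?_⟩)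
  by_contra hw
  have := hmax _ _ _ (hp.concat hw hvw)
  simp at this

theorem IsAcyclic.eq_zero_of_sum_neighborFinset_eq_zero [Fintype V] [DecidableRel G.Adj]
    {R : Type*} [AddCommMonoid R] (hG : G.IsAcyclic) (g : V → V → R)
    (hsymm : ∀ u v, G.Adj u v → g u v = 0 → g v u = 0)
    (hsum : ∀ v, ∑ u ∈ G.neighborFinset v, g v u = 0) {u v : V} (huv : G.Adj u v) :
    g u v = 0 := by
  let H : SimpleGraph V := fromRel fun a b => G.Adj a b ∧ g a b ≠ 0
  have hH : ∀ {a b}, H.Adj a b ↔ G.Adj a b ∧ g a b ≠ 0 := by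
    intro a b
    simp only [H, fromRel_adj]
    exact ⟨fun ⟨_, h⟩ => h.elim id fun ⟨hba, h⟩ => ⟨hba.symm, mt (hsymm a b hba.symm) h⟩,
      fun h => ⟨h.1.ne, .inl h⟩⟩
  have hH_bot : H = ⊥ := by
    refine (hG.anti fun a b h => (hH.mp h).1).eq_bot_of_forall_degree_ne_one fun a ha => ?_
    obtain ⟨b, hab, hunique⟩ := degree_eq_one_iff_existsUnique_adj.mp ha
    refine (hH.mp hab).2 ?_
    rw [← hsum a, sum_eq_single_of_mem b (by simpa using (hH.mp hab).1)]
    intro c hc hcb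
    by_contra hgc
    exact hcb (hunique c (hH.mpr ⟨by simpa using hc, hgc⟩))
  by_contra h
  simpa [hH_bot] using hH.mpr ⟨huv, h⟩

theorem Walk.apply_eq_of_forall_adj {β : Type*} {f : V → β}
    (hf : ∀ u v, G.Adj u v → f u = f v) {u v : V} (p : G.Walk u v) : f u = f v := by
  induction p with
  | nil => rfl
  | cons hadj _ ih => exact (hf _ _ hadj).trans ih

end SimpleGraph

namespace SimpleGraph.Subgraph.IsPerfectMatching

variable {V : Type*} [Fintype V] [DecidableEq V] {T : SimpleGraph V} {M : T.Subgraph}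

theorem lapMatrix_mulVec_sub_two_smul_apply (hM : M.IsPerfectMatching) (X : V → ℝ) (v : V) :
    ((T.lapMatrix ℝ).mulVec X - (2 : ℝ) • X) v =
      ∑ u ∈ T.neighborFinset v, ((if M.Adj v u then -X v else X v) - X u) := by
  obtain ⟨m, hvm, hmunique⟩ := hM.1 (hM.2 v)
  have hmatch : ∑ u ∈ T.neighborFinset v, (if M.Adj v u then -2 * X v else 0) = -2 * X v := by
    rw [sum_eq_single_of_mem m (by simpa using hvm.adj_sub) fun u _ hum => if_neg
      (mt (hmunique u) hum), if_pos hvm]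
  have hsplit : ∀ u, (if M.Adj v u then -X v else X v) - X u =
      (X v - X u) + if M.Adj v u then -2 * X v else 0 := by
    intro u; split_ifs <;> ring
  simp only [Pi.sub_apply, lapMatrix_mulVec_apply, Pi.smul_apply, smul_eq_mul, hsplit,
    sum_add_distrib, hmatch, sum_sub_distrib, sum_const, card_neighborFinset_eq_degree,
    nsmul_eq_mul]
  ring

theorem eq_ite_of_lapMatrix_mulVec_eq_two_smul (hM : M.IsPerfectMatching) (hT : T.IsAcyclic)
    {X : V → ℝ} (hX : (T.lapMatrix ℝ).mulVec X = (2 : ℝ) • X) {u v : V} (huv : T.Adj u v) :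
    X v = if M.Adj u v then -X u else X u := by
  have hdefect := hT.eq_zero_of_sum_neighborFinset_eq_zero
    (fun a b => (if M.Adj a b then -X a else X a) - X b)
    (fun a b _ h => by
      simp only [M.adj_comm b a]
      split_ifs at h ⊢ <;> linarith)
    (fun a => by rw [← hM.lapMatrix_mulVec_sub_two_smul_apply, hX, sub_self, Pi.zero_apply])
    huv
  exact (sub_eq_zero.mp hdefect).symm

end SimpleGraph.Subgraph.IsPerfectMatching

/-- For a tree `T` with perfect matching `M`, a nonzero vector `X` is an
eigenvector of `L(T)` for the eigenvalue `2` iff `X` takes exactly the two values `t` and `-t`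
for some `t ≠ 0`, with `X u = -X v` on matching edges and `X u = X v` on non-matching edges. -/
theorem tree_perfect_matching_eigenvector_two_characterization
    {V : Type*} [Fintype V] [DecidableEq V]
    (T : SimpleGraph V) (hT : T.IsTree)
    (M : T.Subgraph) (hM : M.IsPerfectMatching) (X : V → ℝ) :
    (X ≠ 0 ∧ (T.lapMatrix ℝ).mulVec X = (2 : ℝ) • X) ↔
      ∃ t : ℝ, t ≠ 0 ∧ (∀ v : V, X v = t ∨ X v = -t) ∧
        (∀ u v : V, M.Adj u v → X u = -X v) ∧
        (∀ u v : V, T.Adj u v → ¬ M.Adj u v → X u = X v) := by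
  obtain ⟨r⟩ := hT.connected.nonempty
  constructor
  · rintro ⟨hX0, hX⟩
    have hedge : ∀ u v, T.Adj u v → X v = if M.Adj u v then -X u else X u :=
      fun _ _ huv => hM.eq_ite_of_lapMatrix_mulVec_eq_two_smul hT.isAcyclic hX huv
    have habs : ∀ v, |X v| = |X r| := fun v =>
      ((hT.connected r v).some.apply_eq_of_forall_adj (f := fun w => |X w|) fun a b hab => by
        rw [hedge a b hab]; split_ifs <;> simp [abs_neg]).symm
    refine ⟨X r, fun h => hX0 (funext fun v => by simpa [h] using habs v),
      fun v => abs_eq_abs.mp (habs v), fun u v huv => ?_, fun u v huv hm => ?_⟩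
    · simpa [huv.symm] using hedge v u huv.adj_sub.symm
    · simpa [M.adj_comm v u, hm] using hedge v u huv.symm
  · rintro ⟨t, ht0, hval, hmatch, hnon⟩
    refine ⟨fun h => ht0 ?_, funext fun v => sub_eq_zero.mp ?_⟩
    · rcases hval r with h' | h' <;> simp_all
    · rw [← Pi.sub_apply, hM.lapMatrix_mulVec_sub_two_smul_apply]
      refine sum_eq_zero fun u hu => ?_
      split_ifs with hm
      · linarith [hmatch v u hm]
      · linarith [hnon v u (by simpa using hu) hm]
end

section
/- Let G be a broken sun graph containing a perfect matching such that 2 is an eigenvalue of L(G). Then there exists an eigenvector X of L(G) corresponding to the eigenvalue 2 all of whose entries lie in {−r, r} for some real number r > 0. -/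
open scoped Classical

/-- A broken sun graph: a cycle `c 0, …, c (g-1)` (g ≥ 3) together with pendant vertices,
each attached to a cycle vertex, with at most one pendant per cycle vertex. -/
def SimpleGraph.IsBrokenSun {V : Type*} (G : SimpleGraph V) : Prop :=
  ∃ (g : ℕ) (hg : 3 ≤ g) (c : Fin g → V), Function.Injective c ∧
    (∀ i j : Fin g, G.Adj (c i) (c j) ↔ (j = i + (⟨1, by omega⟩ : Fin g) ∨ i = j + (⟨1, by omega⟩ : Fin g))) ∧
    (∀ v : V, v ∉ Set.range c → ∃! w : V, G.Adj v w) ∧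
    (∀ v : V, v ∉ Set.range c → ∀ w : V, G.Adj v w → w ∈ Set.range c) ∧
    (∀ i : Fin g, ∀ v w : V, v ∉ Set.range c → w ∉ Set.range c →
      G.Adj v (c i) → G.Adj w (c i) → v = w)

/-!
On the cycle write `y i` for the value of the eigenvector at `c i`. The eigen-equations say that a
pendant vertex carries minus the value of its neighbour, that `y (i + 1) + y (i - 1) = 2 y i` at a
cycle vertex with a pendant, and that `y (i + 1) = - y (i - 1)` at one without.

If some cycle vertex carries a pendant, the perfect matching pairs the other cycle vertices along
cycle edges, so the sign `s i = -1` if `c i` is matched to `c (i - 1)`, `s i = 1` otherwise, is `1`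
on both sides of a pendant position and flips across every other position. The quantity
`s i (y i ^ 2 - y (i - 1) ^ 2)` is then unchanged by a step across a position without pendant and
grows by `2 (y i - y (i - 1)) ^ 2` across one with a pendant. Once around the cycle these
nonnegative increments add up to zero, so they vanish; the quantity is then constant, zero at a
pendant position, and `|Y|` is constant.

Without pendants `G` is the cycle and `y (i + 2) = - y i`; a combination of `y` and its shift by
one takes the values `r, -r` at two consecutive positions and hence only the values `± r`.
-/

open Fin.CommRing

namespace Fin

variable {g : ℕ} [NeZero g]

theorem apply_eq_of_apply_add_one_eq {α : Type*} {f : Fin g → α} (h : ∀ i, f (i + 1) = f i)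
    (i j : Fin g) : f i = f j := by
  have key : ∀ k : ℕ, f k = f 0 := by
    intro k
    induction k with
    | zero => simp
    | succ k ih => rw [Nat.cast_succ, h, ih]
  rw [← cast_val_eq_self i, ← cast_val_eq_self j, key, key]

theorem apply_eq_of_apply_add_two_eq {α : Type*} {f : Fin g → α} (h : ∀ i, f (i + 2) = f i)
    {j : Fin g} (hj : f (j + 1) = f j) (i : Fin g) : f i = f j := by
  have hpair : ∀ i, ({f (i + 1), f (i + 1 + 1)} : Set α) = {f i, f (i + 1)} := by
    intro i
    rw [add_assoc, one_add_one_eq_two, h, Set.pair_comm]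
  have := apply_eq_of_apply_add_one_eq (f := fun i => ({f i, f (i + 1)} : Set α)) hpair i j
  rw [hj, Set.pair_eq_singleton] at this
  simpa using this.subset (Set.mem_insert (f i) _)

end Fin

section CycleRecurrence

variable {g : ℕ} [NeZero g]

theorem sq_eq_sq_of_pendant_recurrence {P : Fin g → Prop} {y s : Fin g → ℝ}
    (hs : ∀ i, s i ≠ 0) (hsP : ∀ i, P i → s i = 1 ∧ s (i + 1) = 1)
    (hsN : ∀ i, ¬ P i → s (i + 1) = - s i)
    (hyP : ∀ i, P i → y (i + 1) + y (i - 1) = 2 * y i)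
    (hyN : ∀ i, ¬ P i → y (i + 1) = - y (i - 1))
    {i₀ : Fin g} (hi₀ : P i₀) (i : Fin g) : y i ^ 2 = y i₀ ^ 2 := by
  let ψ : Fin g → ℝ := fun i => s i * (y i ^ 2 - y (i - 1) ^ 2)
  have hψ : ∀ i, ψ (i + 1) = ψ i + if P i then 2 * (y i - y (i - 1)) ^ 2 else 0 := by
    intro i
    simp only [ψ, add_sub_cancel_right]
    split_ifs with hP
    · obtain ⟨hsi, hsi'⟩ := hsP i hP
      rw [hsi, hsi', show y (i + 1) = 2 * y i - y (i - 1) by linarith [hyP i hP]]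
      ring
    · rw [hsN i hP, hyN i hP]
      ring
  have hflat : ∀ i, P i → y i = y (i - 1) := by
    have hsum : ∑ i, (if P i then 2 * (y i - y (i - 1)) ^ 2 else 0) = 0 := by
      have := Equiv.sum_comp (Equiv.addRight 1) ψ
      simp only [Equiv.coe_addRight, hψ, Finset.sum_add_distrib] at this
      linarith
    intro i hi
    have := (Finset.sum_eq_zero_iff_of_nonneg (fun j _ => by positivity)).1 hsum i
      (Finset.mem_univ _)
    rw [if_pos hi] at this
    nlinarith [sq_nonneg (y i - y (i - 1))]
  have hψ_zero : ∀ i, ψ i = 0 := by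
    have hconst : ∀ i, ψ (i + 1) = ψ i := by
      intro i
      rw [hψ]
      split_ifs with hP
      · rw [hflat i hP]; ring
      · ring
    intro i
    rw [Fin.apply_eq_of_apply_add_one_eq hconst i i₀]
    simp only [ψ, ← hflat i₀ hi₀, sub_self, mul_zero]
  refine Fin.apply_eq_of_apply_add_one_eq (f := fun i => y i ^ 2) (fun i => ?_) i i₀
  have := hψ_zero (i + 1)
  simp only [ψ, add_sub_cancel_right, mul_eq_zero] at this
  exact sub_eq_zero.1 (this.resolve_left (hs _))

theorem exists_two_valued_of_add_one_eq_neg_sub_one {y : Fin g → ℝ}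
    (hy : ∀ i, y (i + 1) = - y (i - 1)) (hy0 : y ≠ 0) :
    ∃ r, 0 < r ∧ ∃ x : Fin g → ℝ, (∀ i, x (i + 1) = - x (i - 1)) ∧
      ∀ i, x i = r ∨ x i = -r := by
  have hy2 : ∀ i, y (i + 1 + 1) = - y i := fun i => by simpa using hy (i + 1)
  obtain ⟨j, hj : y j ≠ 0⟩ := Function.ne_iff.1 hy0
  let x : Fin g → ℝ := fun i => (y j - y (j + 1)) * y i + (y j + y (j + 1)) * y (i + 1)
  have hx : ∀ i, x (i + 1) = - x (i - 1) := by
    intro i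
    simp only [x, sub_add_cancel]
    rw [hy2, hy i]
    ring
  refine ⟨y j ^ 2 + y (j + 1) ^ 2, by positivity, x, hx,
    fun i => sq_eq_sq_iff_eq_or_eq_neg.1 ?_⟩
  have hxj : x j ^ 2 = (y j ^ 2 + y (j + 1) ^ 2) ^ 2 := by
    simp only [x]; ring
  rw [← hxj]
  refine Fin.apply_eq_of_apply_add_two_eq (f := fun i => x i ^ 2) (fun i => ?_) ?_ i
  · rw [← one_add_one_eq_two, ← add_assoc,
      show x (i + 1 + 1) = - x i by simpa using hx (i + 1), neg_sq]
  · simp only [x, hy2]; ring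

end CycleRecurrence

theorem exists_pos_forall_eq_or_eq_neg {ι : Type*} {y : ι → ℝ} (hy0 : y ≠ 0)
    (hy : ∀ i j, y i ^ 2 = y j ^ 2) : ∃ r, 0 < r ∧ ∀ i, y i = r ∨ y i = -r := by
  obtain ⟨i₀, hi₀ : y i₀ ≠ 0⟩ := Function.ne_iff.1 hy0
  exact ⟨|y i₀|, abs_pos.2 hi₀, fun i =>
    (abs_eq (abs_nonneg _)).1 ((sq_eq_sq_iff_abs_eq_abs _ _).1 (hy i i₀))⟩

namespace SimpleGraph

variable {V : Type*}

structure BrokenSunPresentation (G : SimpleGraph V) (g : ℕ) [NeZero g] where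
  cycle : Fin g → V
  three_le : 3 ≤ g
  cycle_injective : Function.Injective cycle
  adj_cycle_iff : ∀ i j, G.Adj (cycle i) (cycle j) ↔ j = i + 1 ∨ i = j + 1
  existsUnique_adj : ∀ v ∉ Set.range cycle, ∃! w, G.Adj v w
  adj_mem_range : ∀ v ∉ Set.range cycle, ∀ w, G.Adj v w → w ∈ Set.range cycle
  eq_of_adj_cycle : ∀ i v w, v ∉ Set.range cycle → w ∉ Set.range cycle →
    G.Adj v (cycle i) → G.Adj w (cycle i) → v = w

theorem IsBrokenSun.exists_presentation {G : SimpleGraph V} (h : G.IsBrokenSun) :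
    ∃ (g : ℕ) (_ : NeZero g), Nonempty (G.BrokenSunPresentation g) := by
  obtain ⟨g, hg, c, hinj, hadj, hpu, hpr, hpa⟩ := h
  have : NeZero g := ⟨by omega⟩
  have hone : (⟨1, by omega⟩ : Fin g) = 1 := Fin.ext (Nat.mod_eq_of_lt (by omega)).symm
  exact ⟨g, this, ⟨c, hg, hinj, by simpa only [hone] using hadj, hpu, hpr, hpa⟩⟩

namespace BrokenSunPresentation

variable {G : SimpleGraph V} {g : ℕ} [NeZero g] (S : G.BrokenSunPresentation g)

def HasPendant (i : Fin g) : Prop := ∃ p ∉ Set.range S.cycle, G.Adj p (S.cycle i)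

theorem cycle_add_one_ne_cycle_sub_one (i : Fin g) : S.cycle (i + 1) ≠ S.cycle (i - 1) := by
  intro h
  have h2 : (2 : Fin g) = 0 := by linear_combination S.cycle_injective h
  rw [Fin.ext_iff] at h2
  simp [Nat.mod_eq_of_lt (show 2 < g by have := S.three_le; omega)] at h2

theorem adj_cycle_iff_eq_or_pendant (i : Fin g) (u : V) :
    G.Adj (S.cycle i) u ↔
      u = S.cycle (i + 1) ∨ u = S.cycle (i - 1) ∨
        (u ∉ Set.range S.cycle ∧ G.Adj u (S.cycle i)) := by
  by_cases hu : u ∈ Set.range S.cycle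
  · obtain ⟨j, rfl⟩ := hu
    rw [S.adj_cycle_iff, S.cycle_injective.eq_iff, S.cycle_injective.eq_iff, eq_sub_iff_add_eq,
      eq_comm (a := i)]
    simp only [Set.mem_range_self, not_true_eq_false, false_and, or_false]
  · simp only [hu, not_false_eq_true, true_and, G.adj_comm u]
    exact ⟨fun h => .inr (.inr h), fun h => h.elim (fun h' => absurd ⟨_, h'.symm⟩ hu)
      (fun h => h.elim (fun h' => absurd ⟨_, h'.symm⟩ hu) id)⟩

section Matching

variable {M : G.Subgraph}

theorem not_adj_cycle_of_hasPendant (hM : M.IsPerfectMatching) {i : Fin g}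
    (hi : S.HasPendant i) (j : Fin g) :
    ¬ M.Adj (S.cycle i) (S.cycle j) := by
  obtain ⟨p, hp, hpi⟩ := hi
  have hM' := Subgraph.isPerfectMatching_iff.1 hM
  obtain ⟨w, hpw, -⟩ := hM' p
  have hwi : w = S.cycle i := (S.existsUnique_adj p hp).unique hpw.adj_sub hpi
  intro hij
  exact hp ⟨j, (hM' (S.cycle i)).unique hij (hwi ▸ hpw.symm)⟩

theorem adj_cycle_sub_one_iff_not_adj_cycle_add_one (hM : M.IsPerfectMatching) {i : Fin g}
    (hi : ¬ S.HasPendant i) :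
    M.Adj (S.cycle i) (S.cycle (i - 1)) ↔ ¬ M.Adj (S.cycle (i + 1)) (S.cycle i) := by
  have hne := S.cycle_add_one_ne_cycle_sub_one i
  obtain ⟨w, hw, hw_unique⟩ := Subgraph.isPerfectMatching_iff.1 hM (S.cycle i)
  rcases (S.adj_cycle_iff_eq_or_pendant i w).1 hw.adj_sub with rfl | rfl | hpend
  · exact iff_of_false (fun h => hne (hw_unique _ h).symm) (not_not.2 hw.symm)
  · exact iff_of_true hw fun h => hne (hw_unique _ h.symm)
  · exact absurd ⟨w, hpend⟩ hi

end Matching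

variable [Fintype V]

theorem neighborFinset_eq_of_notMem_range {v w : V} (hv : v ∉ Set.range S.cycle)
    (hw : G.Adj v w) : G.neighborFinset v = {w} := by
  ext u
  rw [mem_neighborFinset, Finset.mem_singleton]
  exact ⟨fun hu => (S.existsUnique_adj v hv).unique hu hw, fun hu => hu ▸ hw⟩

variable [DecidableEq V]

theorem neighborFinset_cycle_of_adj {i : Fin g} {p : V}
    (hp : p ∉ Set.range S.cycle) (hpi : G.Adj p (S.cycle i)) :
    G.neighborFinset (S.cycle i) = {S.cycle (i + 1), S.cycle (i - 1), p} := by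
  ext u
  rw [mem_neighborFinset, S.adj_cycle_iff_eq_or_pendant]
  simp only [Finset.mem_insert, Finset.mem_singleton]
  exact or_congr_right (or_congr_right
    ⟨fun hu => S.eq_of_adj_cycle i u p hu.1 hp hu.2 hpi, fun hu => hu ▸ ⟨hp, hpi⟩⟩)

theorem neighborFinset_cycle_of_not_hasPendant {i : Fin g} (hi : ¬ S.HasPendant i) :
    G.neighborFinset (S.cycle i) = {S.cycle (i + 1), S.cycle (i - 1)} := by
  ext u
  rw [mem_neighborFinset, S.adj_cycle_iff_eq_or_pendant]
  simp only [Finset.mem_insert, Finset.mem_singleton]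
  exact or_congr_right (or_iff_left fun hu => hi ⟨u, hu⟩)

section Eigenvector

variable {R : Type*} [CommRing R] (x : V → R)

theorem lapMatrix_mulVec_apply_of_notMem_range {v w : V} (hv : v ∉ Set.range S.cycle)
    (hw : G.Adj v w) : (G.lapMatrix R).mulVec x v = x v - x w := by
  rw [lapMatrix_mulVec_apply, degree, S.neighborFinset_eq_of_notMem_range hv hw]
  simp

theorem lapMatrix_mulVec_apply_cycle_of_adj {i : Fin g} {p : V} (hp : p ∉ Set.range S.cycle)
    (hpi : G.Adj p (S.cycle i)) :
    (G.lapMatrix R).mulVec x (S.cycle i) =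
      3 * x (S.cycle i) - (x (S.cycle (i + 1)) + x (S.cycle (i - 1)) + x p) := by
  have h₁ : S.cycle (i + 1) ∉ ({S.cycle (i - 1), p} : Finset V) := by
    simpa [S.cycle_add_one_ne_cycle_sub_one] using fun h => hp ⟨_, h⟩
  have h₂ : S.cycle (i - 1) ∉ ({p} : Finset V) := by
    simpa using fun h => hp ⟨_, h⟩
  rw [lapMatrix_mulVec_apply, degree, S.neighborFinset_cycle_of_adj hp hpi,
    Finset.card_insert_of_notMem h₁, Finset.card_insert_of_notMem h₂,
    Finset.sum_insert h₁, Finset.sum_insert h₂]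
  simp [add_assoc]

theorem lapMatrix_mulVec_apply_cycle_of_not_hasPendant {i : Fin g} (hi : ¬ S.HasPendant i) :
    (G.lapMatrix R).mulVec x (S.cycle i) =
      2 * x (S.cycle i) - (x (S.cycle (i + 1)) + x (S.cycle (i - 1))) := by
  rw [lapMatrix_mulVec_apply, degree, S.neighborFinset_cycle_of_not_hasPendant hi,
    Finset.card_pair (S.cycle_add_one_ne_cycle_sub_one i),
    Finset.sum_pair (S.cycle_add_one_ne_cycle_sub_one i)]
  simp

variable {Y : V → R}

theorem eigenvector_two_apply_of_notMem_range {v w : V}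
    (hY : (G.lapMatrix R).mulVec Y = (2 : R) • Y) (hv : v ∉ Set.range S.cycle)
    (hw : G.Adj v w) : Y v = - Y w := by
  have := congrFun hY v
  rw [S.lapMatrix_mulVec_apply_of_notMem_range Y hv hw, Pi.smul_apply, smul_eq_mul] at this
  linear_combination -this

theorem eigenvector_two_cycle_of_hasPendant {i : Fin g}
    (hY : (G.lapMatrix R).mulVec Y = (2 : R) • Y) (hi : S.HasPendant i) :
    Y (S.cycle (i + 1)) + Y (S.cycle (i - 1)) = 2 * Y (S.cycle i) := by
  obtain ⟨p, hp, hpi⟩ := hi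
  have := congrFun hY (S.cycle i)
  rw [S.lapMatrix_mulVec_apply_cycle_of_adj Y hp hpi, Pi.smul_apply, smul_eq_mul,
    S.eigenvector_two_apply_of_notMem_range hY hp hpi] at this
  linear_combination -this

theorem eigenvector_two_cycle_of_not_hasPendant {i : Fin g}
    (hY : (G.lapMatrix R).mulVec Y = (2 : R) • Y) (hi : ¬ S.HasPendant i) :
    Y (S.cycle (i + 1)) = - Y (S.cycle (i - 1)) := by
  have := congrFun hY (S.cycle i)
  rw [S.lapMatrix_mulVec_apply_cycle_of_not_hasPendant Y hi, Pi.smul_apply, smul_eq_mul] at this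
  linear_combination -this

end Eigenvector

variable {Y : V → ℝ}

theorem sq_eigenvector_two_eq_of_hasPendant {M : G.Subgraph} (hM : M.IsPerfectMatching)
    (hY : (G.lapMatrix ℝ).mulVec Y = (2 : ℝ) • Y) {i₀ : Fin g} (hi₀ : S.HasPendant i₀)
    (v w : V) : Y v ^ 2 = Y w ^ 2 := by
  let s : Fin g → ℝ := fun i => if M.Adj (S.cycle i) (S.cycle (i - 1)) then -1 else 1
  have hcycle : ∀ i, Y (S.cycle i) ^ 2 = Y (S.cycle i₀) ^ 2 :=
    sq_eq_sq_of_pendant_recurrence (P := S.HasPendant) (y := Y ∘ S.cycle) (s := s)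
      (fun i => by simp only [s]; split_ifs <;> norm_num)
      (fun i hi => by
        have hno := S.not_adj_cycle_of_hasPendant hM hi
        simp only [s, add_sub_cancel_right, M.adj_comm (S.cycle (i + 1)), hno, if_false,
          and_self])
      (fun i hi => by
        simp only [s, add_sub_cancel_right, S.adj_cycle_sub_one_iff_not_adj_cycle_add_one hM hi]
        split_ifs <;> norm_num)
      (fun i hi => S.eigenvector_two_cycle_of_hasPendant hY hi)
      (fun i hi => S.eigenvector_two_cycle_of_not_hasPendant hY hi) hi₀
  have hall : ∀ v, Y v ^ 2 = Y (S.cycle i₀) ^ 2 := by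
    intro v
    by_cases hv : v ∈ Set.range S.cycle
    · obtain ⟨i, rfl⟩ := hv
      exact hcycle i
    · obtain ⟨w, hw, -⟩ := S.existsUnique_adj v hv
      obtain ⟨i, rfl⟩ := S.adj_mem_range v hv w hw
      rw [S.eigenvector_two_apply_of_notMem_range hY hv hw, neg_sq, hcycle]
  rw [hall v, hall w]

theorem exists_two_valued_eigenvector_two_of_forall_not_hasPendant (hY0 : Y ≠ 0)
    (hY : (G.lapMatrix ℝ).mulVec Y = (2 : ℝ) • Y) (h : ∀ i, ¬ S.HasPendant i) :
    ∃ r, 0 < r ∧ ∃ X : V → ℝ, X ≠ 0 ∧ (G.lapMatrix ℝ).mulVec X = (2 : ℝ) • X ∧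
      ∀ v, X v = r ∨ X v = -r := by
  have hsurj : Function.Surjective S.cycle := by
    intro v
    by_contra hv
    obtain ⟨w, hw, -⟩ := S.existsUnique_adj v hv
    obtain ⟨i, rfl⟩ := S.adj_mem_range v hv w hw
    exact h i ⟨v, hv, hw⟩
  have hy0 : Y ∘ S.cycle ≠ 0 := fun h0 => hY0 <| funext fun v => by
    obtain ⟨i, rfl⟩ := hsurj v
    exact congrFun h0 i
  obtain ⟨r, hr, x, hx, hxr⟩ := exists_two_valued_of_add_one_eq_neg_sub_one
    (fun i => S.eigenvector_two_cycle_of_not_hasPendant hY (h i)) hy0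
  have hX : ∀ i, (x ∘ Function.invFun S.cycle) (S.cycle i) = x i := fun i => by
    rw [Function.comp_apply, Function.leftInverse_invFun S.cycle_injective i]
  refine ⟨r, hr, x ∘ Function.invFun S.cycle, fun h0 => ?_, funext fun v => ?_,
    fun _ => hxr _⟩
  · have := congrFun h0 (S.cycle 0)
    rw [hX, Pi.zero_apply] at this
    rcases hxr 0 with hx0 | hx0 <;> linarith
  · obtain ⟨i, rfl⟩ := hsurj v
    rw [S.lapMatrix_mulVec_apply_cycle_of_not_hasPendant _ (h i), Pi.smul_apply, smul_eq_mul,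
      hX, hX, hX, hx i]
    ring

end BrokenSunPresentation

end SimpleGraph

/-- A broken sun graph with a perfect matching having Laplacian eigenvalue `2`
admits an eigenvector for `2` whose entries all lie in `{-r, r}` for some `r > 0`. -/
theorem brokenSun_eigenvector_two_two_values {V : Type*} [Fintype V] [DecidableEq V]
    (G : SimpleGraph V) (hbs : G.IsBrokenSun)
    (M : G.Subgraph) (hM : M.IsPerfectMatching)
    (h2 : ∃ Y : V → ℝ, Y ≠ 0 ∧ (G.lapMatrix ℝ).mulVec Y = (2 : ℝ) • Y) :
    ∃ (r : ℝ), 0 < r ∧ ∃ X : V → ℝ, X ≠ 0 ∧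
      (G.lapMatrix ℝ).mulVec X = (2 : ℝ) • X ∧ ∀ v : V, X v = r ∨ X v = -r := by
  obtain ⟨g, _, ⟨S⟩⟩ := hbs.exists_presentation
  obtain ⟨Y, hY0, hY⟩ := h2
  by_cases hpend : ∃ i, S.HasPendant i
  · obtain ⟨i₀, hi₀⟩ := hpend
    obtain ⟨r, hr, hYr⟩ :=
      exists_pos_forall_eq_or_eq_neg hY0 (S.sq_eigenvector_two_eq_of_hasPendant hM hY hi₀)
    exact ⟨r, hr, Y, hY0, hY, hYr⟩
  · exact S.exists_two_valued_eigenvector_two_of_forall_not_hasPendant hY0 hY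
      (not_exists.1 hpend)
end

section
/- Let G be a unicyclic graph containing a perfect matching such that 2 is an eigenvalue of L(G). Then there exists an eigenvector X of L(G) corresponding to the eigenvalue 2 all of whose entries lie in {−r, r} for some real number r > 0. -/
/-!
View the perfect matching as a `1`-regular spanning subgraph `P ≤ G` and put `H = G \ P`. Then
`L(G) = L(H) + 1 - A(P)`, so every nonzero `x` that is constant along the edges of `H` and changes
sign along the edges of `P` (that is, `x ∈ K ⊓ N` with `K = ker L(H)` and `N` the sign-alternating
functions of `P`) is an eigenvector for `2`, and `|x|` is constant because `G` is connected.

Such an `x` exists: counting edges, `dim K ≥ n - |E(H)|` and `dim N ≥ n - |E(P)|`, and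
`|E(H)| + |E(P)| = |E(G)| = n`. If `K ⊓ N = 0`, then `K ⊕ N` is the whole space. For an eigenvector
`y` for `2` the vector `t = L(H) y = y + A(P) y` is orthogonal to `K` (as `L(H)` is symmetric) and
to `N` (as `A(P)` acts as `-1` on `N`), so `t = 0`; but then `y ∈ K ⊓ N`, a contradiction.
-/

open scoped Classical

open Finset Matrix Module

theorem Matrix.IsSymm.mulVec_dotProduct {n R : Type*} [Fintype n] [CommSemiring R]
    {S : Matrix n n R} (hS : S.IsSymm) (x y : n → R) : S *ᵥ x ⬝ᵥ y = x ⬝ᵥ S *ᵥ y := by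
  rw [dotProduct_mulVec, ← vecMul_transpose, hS.eq, dotProduct_comm]

theorem card_le_finrank_add_card_of_ker_le {V ι K : Type*} [Fintype V] [Fintype ι] [Field K]
    (Φ : (V → K) →ₗ[K] (ι → K)) {p : Submodule K (V → K)} (hΦ : LinearMap.ker Φ ≤ p) :
    Fintype.card V ≤ finrank K p + Fintype.card ι := by
  have := Φ.finrank_range_add_finrank_ker
  have := Submodule.finrank_le (LinearMap.range Φ)
  have := Submodule.finrank_mono hΦ
  simp only [finrank_fintype_fun_eq_card] at *
  omega

namespace SimpleGraph

variable {V : Type*}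

def negAdjSubmodule (G : SimpleGraph V) (R : Type*) [Ring R] : Submodule R (V → R) where
  carrier := {x | ∀ i j, G.Adj i j → x i = -x j}
  add_mem' hx hy i j h := by simp [hx i j h, hy i j h, add_comm]
  zero_mem' _ _ _ := by simp
  smul_mem' c x hx i j h := by simp [hx i j h]

theorem card_le_finrank_negAdjSubmodule_add_card_edgeFinset [Fintype V] (G : SimpleGraph V)
    [Fintype G.edgeSet] (K : Type*) [Field K] :
    Fintype.card V ≤ finrank K (G.negAdjSubmodule K) + #G.edgeFinset := by
  let Φ : (V → K) →ₗ[K] (G.edgeSet → K) :=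
    LinearMap.pi fun e ↦
      LinearMap.proj (R := K) (φ := fun _ ↦ K) e.1.out.1 + LinearMap.proj e.1.out.2
  rw [edgeFinset_card]
  refine card_le_finrank_add_card_of_ker_le Φ fun x hx i j hij ↦ ?_
  have hx := congrFun (LinearMap.mem_ker.mp hx) ⟨s(i, j), hij⟩
  have hout := Quot.out_eq s(i, j)
  simp only [Φ, LinearMap.pi_apply, LinearMap.add_apply, LinearMap.proj_apply, Pi.zero_apply] at hx
  generalize Quot.out s(i, j) = p at hx hout
  rcases Sym2.eq_iff.mp hout with ⟨rfl, rfl⟩ | ⟨rfl, rfl⟩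
  exacts [eq_neg_of_add_eq_zero_left hx, eq_neg_of_add_eq_zero_right hx]

theorem card_le_finrank_ker_lapMatrix_add_card_edgeFinset [Fintype V] [DecidableEq V]
    (G : SimpleGraph V) [DecidableRel G.Adj] [Fintype G.edgeSet] :
    Fintype.card V ≤ finrank ℝ (LinearMap.ker (toLin' (G.lapMatrix ℝ))) + #G.edgeFinset := by
  let Φ : (V → ℝ) →ₗ[ℝ] (G.edgeSet → ℝ) :=
    LinearMap.pi fun e ↦
      LinearMap.proj (R := ℝ) (φ := fun _ ↦ ℝ) e.1.out.1 - LinearMap.proj e.1.out.2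
  rw [edgeFinset_card]
  refine card_le_finrank_add_card_of_ker_le Φ fun x hx ↦ ?_
  rw [LinearMap.mem_ker, toLin'_apply, lapMatrix_mulVec_eq_zero_iff_forall_adj]
  intro i j hij
  have hx := congrFun (LinearMap.mem_ker.mp hx) ⟨s(i, j), hij⟩
  have hout := Quot.out_eq s(i, j)
  simp only [Φ, LinearMap.pi_apply, LinearMap.sub_apply, LinearMap.proj_apply, Pi.zero_apply,
    sub_eq_zero] at hx
  generalize Quot.out s(i, j) = p at hx hout
  rcases Sym2.eq_iff.mp hout with ⟨rfl, rfl⟩ | ⟨rfl, rfl⟩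
  exacts [hx, hx.symm]

section Laplacian

variable [Fintype V] {G G' : SimpleGraph V} [DecidableRel G.Adj] [DecidableRel G'.Adj]
  {R : Type*}

theorem degree_sdiff_add_degree (h : G' ≤ G) (v : V) :
    (G \ G').degree v + G'.degree v = G.degree v := by
  have degree_eq (H : SimpleGraph V) [DecidableRel H.Adj] :
      H.degree v = ∑ w, if H.Adj v w then 1 else 0 := by
    simpa using H.degree_eq_sum_if_adj (R := ℕ) v
  rw [degree_eq, degree_eq, degree_eq, ← sum_add_distrib]
  refine sum_congr rfl fun w _ ↦ ?_
  by_cases hG' : G'.Adj v w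
  · simp [hG', h hG']
  · simp [hG']

theorem lapMatrix_sdiff_add_lapMatrix [DecidableEq V] [AddGroupWithOne R] (h : G' ≤ G) :
    (G \ G').lapMatrix R + G'.lapMatrix R = G.lapMatrix R := by
  ext i j
  simp only [lapMatrix, degMatrix, Matrix.add_apply, Matrix.sub_apply, diagonal_apply,
    adjMatrix_apply]
  rcases eq_or_ne i j with rfl | hij
  · simp [← degree_sdiff_add_degree h i]
  · by_cases hG' : G'.Adj i j
    · simp [hij, hG', h hG']
    · simp [hij, hG']

namespace IsRegularOfDegree

theorem lapMatrix_eq_one_sub [DecidableEq V] [AddGroupWithOne R] (hG : G.IsRegularOfDegree 1) :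
    G.lapMatrix R = 1 - G.adjMatrix R := by
  simp [lapMatrix, degMatrix, hG.degree_eq, Matrix.diagonal_one]

theorem adjMatrix_mulVec_apply_of_adj [NonAssocSemiring R] (hG : G.IsRegularOfDegree 1)
    {i j : V} (hij : G.Adj i j) (x : V → R) : (G.adjMatrix R *ᵥ x) i = x j := by
  obtain ⟨k, hk⟩ := card_eq_one.mp ((G.card_neighborFinset_eq_degree i).trans (hG.degree_eq i))
  have hj : j ∈ G.neighborFinset i := (mem_neighborFinset _ _ _).mpr hij
  rw [hk, mem_singleton] at hj
  rw [adjMatrix_mulVec_apply, hk, sum_singleton, hj]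

theorem adjMatrix_mulVec_eq_neg_iff [Ring R] (hG : G.IsRegularOfDegree 1) {x : V → R} :
    G.adjMatrix R *ᵥ x = -x ↔ x ∈ G.negAdjSubmodule R := by
  refine ⟨fun hx i j hij ↦ ?_, fun hx ↦ funext fun i ↦ ?_⟩
  · have := congrFun hx i
    rw [hG.adjMatrix_mulVec_apply_of_adj hij] at this
    simp [this]
  · obtain ⟨j, hj⟩ := G.degree_pos_iff_exists_adj i |>.mp (by simp [hG.degree_eq i])
    rw [hG.adjMatrix_mulVec_apply_of_adj hj, Pi.neg_apply, hx i j hj, neg_neg]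

end IsRegularOfDegree

end Laplacian

theorem Subgraph.IsPerfectMatching.isRegularOfDegree_one_spanningCoe [Fintype V]
    {G : SimpleGraph V} {M : G.Subgraph} (hM : M.IsPerfectMatching) :
    M.spanningCoe.IsRegularOfDegree 1 := fun v ↦ by
  rw [Subgraph.degree_spanningCoe]
  exact Subgraph.isPerfectMatching_iff_forall_degree.mp hM v

section SpanningOneRegular

variable [Fintype V] [DecidableEq V] {G G' : SimpleGraph V} [DecidableRel G.Adj]
  [DecidableRel G'.Adj]

theorem card_le_finrank_ker_lapMatrix_sdiff_add_finrank_negAdjSubmodule [Fintype G.edgeSet]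
    (h : G' ≤ G) (hE : #G.edgeFinset = Fintype.card V) :
    Fintype.card V ≤ finrank ℝ (LinearMap.ker (toLin' ((G \ G').lapMatrix ℝ))) +
      finrank ℝ (G'.negAdjSubmodule ℝ) := by
  have hK := (G \ G').card_le_finrank_ker_lapMatrix_add_card_edgeFinset
  have hN := G'.card_le_finrank_negAdjSubmodule_add_card_edgeFinset ℝ
  rw [edgeFinset_sdiff, card_sdiff_of_subset (edgeFinset_mono h)] at hK
  have := card_le_card (edgeFinset_mono h)
  omega

theorem lapMatrix_mulVec_eq_two_smul_iff (hG' : G'.IsRegularOfDegree 1) (h : G' ≤ G)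
    (x : V → ℝ) :
    G.lapMatrix ℝ *ᵥ x = (2 : ℝ) • x ↔ (G \ G').lapMatrix ℝ *ᵥ x = x + G'.adjMatrix ℝ *ᵥ x := by
  rw [← lapMatrix_sdiff_add_lapMatrix h, add_mulVec, hG'.lapMatrix_eq_one_sub, sub_mulVec,
    one_mulVec, two_smul]
  constructor <;> intro hx <;> linear_combination hx

theorem lapMatrix_mulVec_eq_two_smul_of_mem (hG' : G'.IsRegularOfDegree 1) (h : G' ≤ G)
    {x : V → ℝ}
    (hx : x ∈ LinearMap.ker (toLin' ((G \ G').lapMatrix ℝ)) ⊓ G'.negAdjSubmodule ℝ) :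
    G.lapMatrix ℝ *ᵥ x = (2 : ℝ) • x := by
  rw [lapMatrix_mulVec_eq_two_smul_iff hG' h, ← toLin'_apply, LinearMap.mem_ker.mp hx.1,
    hG'.adjMatrix_mulVec_eq_neg_iff.mpr hx.2, add_neg_cancel]

theorem abs_eq_of_mem_ker_lapMatrix_sdiff_inf_negAdjSubmodule (hG : G.Connected) {x : V → ℝ}
    (hx : x ∈ LinearMap.ker (toLin' ((G \ G').lapMatrix ℝ)) ⊓ G'.negAdjSubmodule ℝ) (u v : V) :
    |x u| = |x v| := by
  have hK := ((G \ G').lapMatrix_mulVec_eq_zero_iff_forall_adj).mp (LinearMap.mem_ker.mp hx.1)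
  -- `|x|` is constant along the edges of `G`, so it lies in the kernel of `L(G)`
  have habs : G.lapMatrix ℝ *ᵥ (fun w ↦ |x w|) = 0 := by
    refine (G.lapMatrix_mulVec_eq_zero_iff_forall_adj).mpr fun i j hij ↦ ?_
    by_cases hG' : G'.Adj i j
    · simp [hx.2 i j hG']
    · simp [hK i j ((sdiff_adj _ _ _ _).mpr ⟨hij, hG'⟩)]
  exact (G.lapMatrix_mulVec_eq_zero_iff_forall_reachable).mp habs u v (hG.preconnected u v)

theorem exists_ne_zero_mem_ker_lapMatrix_sdiff_inf_negAdjSubmodule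
    (hG' : G'.IsRegularOfDegree 1) (h : G' ≤ G)
    (hdim : Fintype.card V ≤ finrank ℝ (LinearMap.ker (toLin' ((G \ G').lapMatrix ℝ))) +
      finrank ℝ (G'.negAdjSubmodule ℝ))
    {y : V → ℝ} (hy : y ≠ 0) (hy2 : G.lapMatrix ℝ *ᵥ y = (2 : ℝ) • y) :
    ∃ x ∈ LinearMap.ker (toLin' ((G \ G').lapMatrix ℝ)) ⊓ G'.negAdjSubmodule ℝ, x ≠ 0 := by
  set K := LinearMap.ker (toLin' ((G \ G').lapMatrix ℝ))
  set N := G'.negAdjSubmodule ℝ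
  by_contra! hKN
  have hsup : K ⊔ N = ⊤ := Submodule.eq_top_of_disjoint _ _ (by simpa using hdim)
    (Submodule.disjoint_def.mpr fun x hK hN ↦ hKN x ⟨hK, hN⟩)
  set t := (G \ G').lapMatrix ℝ *ᵥ y
  have ht : t = y + G'.adjMatrix ℝ *ᵥ y := (lapMatrix_mulVec_eq_two_smul_iff hG' h y).1 hy2
  have ht_K : ∀ k ∈ K, t ⬝ᵥ k = 0 := fun k hk ↦ by
    rw [(isSymm_lapMatrix ℝ _).mulVec_dotProduct, ← toLin'_apply, LinearMap.mem_ker.mp hk,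
      dotProduct_zero]
  have ht_N : ∀ a ∈ N, t ⬝ᵥ a = 0 := fun a ha ↦ by
    rw [ht, add_dotProduct, G'.isSymm_adjMatrix.mulVec_dotProduct,
      hG'.adjMatrix_mulVec_eq_neg_iff.mpr ha, dotProduct_neg, add_neg_cancel]
  have ht0 : t = 0 := by
    obtain ⟨k, hk, a, ha, hka⟩ := Submodule.mem_sup.mp (hsup ▸ Submodule.mem_top : t ∈ K ⊔ N)
    rw [← dotProduct_self_eq_zero]
    nth_rw 2 [← hka]
    rw [dotProduct_add, ht_K k hk, ht_N a ha, add_zero]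
  refine hy (hKN y ⟨?_, hG'.adjMatrix_mulVec_eq_neg_iff.mp ?_⟩)
  · exact LinearMap.mem_ker.mpr (by rw [toLin'_apply]; exact ht0)
  · rw [eq_neg_iff_add_eq_zero, add_comm, ← ht, ht0]

end SpanningOneRegular

end SimpleGraph

open SimpleGraph

/-- A unicyclic graph (connected with as many edges as vertices) containing a
perfect matching and having Laplacian eigenvalue `2` admits an eigenvector for `2` whose
entries all lie in `{-r, r}` for some `r > 0`. -/
theorem unicyclic_eigenvector_two_two_values {V : Type*} [Fintype V] [DecidableEq V]
    (G : SimpleGraph V) (hconn : G.Connected)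
    (huni : G.edgeFinset.card = Fintype.card V)
    (M : G.Subgraph) (hM : M.IsPerfectMatching)
    (h2 : ∃ Y : V → ℝ, Y ≠ 0 ∧ (G.lapMatrix ℝ).mulVec Y = (2 : ℝ) • Y) :
    ∃ (r : ℝ), 0 < r ∧ ∃ X : V → ℝ, X ≠ 0 ∧
      (G.lapMatrix ℝ).mulVec X = (2 : ℝ) • X ∧ ∀ v : V, X v = r ∨ X v = -r := by
  obtain ⟨Y, hY, hY2⟩ := h2
  have hP := hM.isRegularOfDegree_one_spanningCoe
  have hPG := M.spanningCoe_le
  obtain ⟨X, hX, hX0⟩ := exists_ne_zero_mem_ker_lapMatrix_sdiff_inf_negAdjSubmodule hP hPG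
    (card_le_finrank_ker_lapMatrix_sdiff_add_finrank_negAdjSubmodule hPG huni) hY hY2
  obtain ⟨v₀, hv₀⟩ := Function.ne_iff.mp hX0
  refine ⟨|X v₀|, abs_pos.mpr hv₀, X, hX0, lapMatrix_mulVec_eq_two_smul_of_mem hP hPG hX,
    fun v ↦ abs_eq_abs.mp ?_⟩
  rw [abs_abs]
  exact abs_eq_of_mem_ker_lapMatrix_sdiff_inf_negAdjSubmodule hconn hX v v₀
end

section
/- If G is a bicyclic graph of odd order n, then the multiplicity of 2 as a Laplacian eigenvalue of G satisfies m_G(2) ≤ 2. Moreover, if both cycle lengths g₁ and g₂ of G are odd, then 2 is not an eigenvalue of L(G), i.e. m_G(2) = 0. -/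
/-!
Deleting the two edges of `G` outside a spanning tree `T` costs at most two dimensions of the
`2`-eigenspace of `L(G)`: eigenvectors that agree at the ends of both deleted edges are
eigenvectors of `L(T)`. So `m_G(2) ≤ 2` once `2` is not a Laplacian eigenvalue of `T`.

That `2` is not a Laplacian eigenvalue of a connected graph of odd order `n` all of whose cycles
are odd (such as `T`, or `G` in the second claim) is a computation modulo `4`. Since `2 * 2 = 0`
there, `det (2 - L) = det (-L) + 2 * tr (adj (-L)) = 2 * ∑ v, det L_v`, where `L_v` is the
principal minor at `v`. Each `L_v` is invertible over `𝔽₂`: a kernel vector `x` of `L` over `𝔽₂`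
makes the edges it cuts into a subgraph of even degrees which, being `2`-coloured by `x` while
every cycle of the graph is odd, is a forest, hence empty, so `x` is constant. Therefore
`det (2 - L) ≡ 2 n ≡ 2 (mod 4)`.
-/

open scoped Classical
open Matrix Module Polynomial Finset

theorem Finset.sum_eq_add_sum_singleton_of_forall_two_le_card {ι M : Type*} [Fintype ι]
    [AddCommMonoid M] (f : Finset ι → M) (hf : ∀ s : Finset ι, 2 ≤ s.card → f s = 0) :
    ∑ s, f s = f ∅ + ∑ i, f {i} := by
  have hsub : insert ∅ (univ.map ⟨singleton, singleton_injective⟩) ⊆ (univ : Finset (Finset ι)) :=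
    subset_univ _
  rw [← sum_subset hsub, sum_insert, sum_map]
  · rfl
  · simp
  · intro s _ hs
    simp only [mem_insert, mem_map, mem_univ, true_and, not_or, not_exists] at hs
    refine hf s (by_contra fun h => ?_)
    interval_cases hcard : s.card
    · exact hs.1 (card_eq_zero.mp hcard)
    · obtain ⟨i, rfl⟩ := card_eq_one.mp hcard
      exact hs.2 i rfl

namespace Matrix

variable {n R : Type*} [Fintype n] [DecidableEq n] [CommRing R]

theorem det_add_smul_of_mul_self_eq_zero (M N : Matrix n n R) {c : R} (hc : c * c = 0) :
    (M + c • N).det = M.det + c * ∑ i, (M.updateRow i (N i)).det := by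
  let rowsN : n → n → R := fun i => N i
  let rowsM : n → n → R := fun i => M i
  have hterm (s : Finset n) : detRowAlternating (s.piecewise (c • rowsN) rowsM) =
      c ^ s.card * detRowAlternating (s.piecewise rowsN rowsM) := by
    have : s.piecewise (c • rowsN) rowsM =
        s.piecewise (fun i => c • s.piecewise rowsN rowsM i) (s.piecewise rowsN rowsM) := by
      ext i : 1
      by_cases hi : i ∈ s <;> simp [hi]
    rw [this]
    simpa using (detRowAlternating (R := R)).toMultilinearMap.map_piecewise_smul
      (fun _ => c) (s.piecewise rowsN rowsM) s
  calc (M + c • N).det = detRowAlternating (c • rowsN + rowsM) := by rw [add_comm]; rfl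
    _ = ∑ s : Finset n, c ^ s.card * detRowAlternating (s.piecewise rowsN rowsM) := by
      simp only [← hterm]
      exact detRowAlternating.toMultilinearMap.map_add_univ _ _
    _ = M.det + c * ∑ i, (M.updateRow i (N i)).det := by
      rw [Finset.sum_eq_add_sum_singleton_of_forall_two_le_card]
      · simp only [card_empty, pow_zero, one_mul, card_singleton, pow_one, ← mul_sum,
          piecewise_empty, piecewise_singleton]
        rfl
      · intro s hs
        obtain ⟨k, hk⟩ := Nat.exists_eq_add_of_le hs
        rw [hk, pow_add, sq, hc, zero_mul, zero_mul]

theorem det_add_smul_one_of_mul_self_eq_zero (M : Matrix n n R) {c : R} (hc : c * c = 0) :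
    (M + c • 1).det = M.det + c * M.adjugate.trace := by
  rw [det_add_smul_of_mul_self_eq_zero M 1 hc, trace]
  congr 2
  refine sum_congr rfl fun i _ => ?_
  rw [diag_apply, adjugate_apply]
  congr 2
  ext j
  simp [one_apply, Pi.single_apply, eq_comm]

namespace IsHermitian

variable {𝕜 : Type*} [RCLike 𝕜] {A : Matrix n n 𝕜}

theorem isSemisimple_toLin' (hA : A.IsHermitian) : End.IsSemisimple (toLin' A) := by
  have hT := (isSymmetric_toEuclideanLin_iff.mpr hA).isFinitelySemisimple
  rw [End.isFinitelySemisimple_iff_isSemisimple] at hT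
  exact (LinearEquiv.isSemisimple_iff _ (toLin' A) (WithLp.linearEquiv 2 𝕜 (n → 𝕜)) rfl).mp hT

theorem finrank_eigenspace_toLin' (hA : A.IsHermitian) (μ : 𝕜) :
    finrank 𝕜 (End.eigenspace (toLin' A) μ) = A.charpoly.rootMultiplicity μ := by
  rw [← hA.isSemisimple_toLin'.isFinitelySemisimple.maxGenEigenspace_eq_eigenspace,
    LinearMap.finrank_maxGenEigenspace_eq, charpoly_toLin']

end IsHermitian

end Matrix

namespace SimpleGraph

variable {V : Type*}

theorem IsAcyclic.exists_degree_eq_one [Fintype V] {H : SimpleGraph V} [DecidableRel H.Adj]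
    (hH : H.IsAcyclic) {a b : V} (hab : H.Adj a b) : ∃ v, H.degree v = 1 := by
  have : Nonempty V := ⟨a⟩
  obtain ⟨u, v, p, hp, hmax⟩ := Walk.exists_isPath_forall_isPath_length_le_length H
  have hnil : ¬ p.Nil := fun h => by
    have := hmax a b hab.toWalk (by simp [hab.ne])
    simp [Walk.length_eq_zero_iff.mpr h] at this
  refine ⟨u, degree_eq_one_iff_existsUnique_adj.mpr ⟨p.snd, p.adj_snd hnil, fun w hw => ?_⟩⟩
  refine hH.eq_snd_of_adj_start hp hw (by_contra fun hwp => ?_)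
  have := hmax w v (p.cons hw.symm) (hp.cons hwp)
  simp at this

theorem IsAcyclic.eq_bot_of_forall_even_degree [Fintype V] {H : SimpleGraph V}
    [DecidableRel H.Adj] (hH : H.IsAcyclic) (heven : ∀ v, Even (H.degree v)) : H = ⊥ := by
  by_contra hne
  obtain ⟨a, b, hab⟩ : ∃ a b, H.Adj a b := by simpa [eq_bot_iff_forall_not_adj] using hne
  obtain ⟨v, hv⟩ := hH.exists_degree_eq_one hab
  exact Nat.not_even_one (hv ▸ heven v)

def cutGraph {α : Type*} (G : SimpleGraph V) (x : V → α) : SimpleGraph V :=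
  G ⊓ (⊤ : SimpleGraph α).comap x

@[simp]
theorem cutGraph_adj {α : Type*} {G : SimpleGraph V} {x : V → α} {a b : V} :
    (G.cutGraph x).Adj a b ↔ G.Adj a b ∧ x a ≠ x b := by
  simp [cutGraph]

theorem cutGraph_le {α : Type*} (G : SimpleGraph V) (x : V → α) : G.cutGraph x ≤ G :=
  inf_le_left

theorem isAcyclic_cutGraph {G : SimpleGraph V}
    (hcyc : ∀ (v : V) (c : G.Walk v v), c.IsCycle → Odd c.length) (x : V → ZMod 2) :
    (G.cutGraph x).IsAcyclic := by
  intro v c hc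
  have hcol : (G.cutGraph x).Colorable 2 := ⟨Coloring.mk x fun h => (cutGraph_adj.mp h).2⟩
  have hodd := hcyc v (c.mapLe (G.cutGraph_le x)) (hc.mapLe _)
  rw [Walk.length_mapLe] at hodd
  exact Nat.not_even_iff_odd.mpr hodd (two_colorable_iff_forall_loop_even.mp hcol v c)

variable [Fintype V] [DecidableEq V] (G : SimpleGraph V) [DecidableRel G.Adj]

theorem lapMatrix_map {R S : Type*} [Ring R] [Ring S] (f : R →+* S) :
    (G.lapMatrix R).map f = G.lapMatrix S := by
  ext i j
  by_cases h : i = j <;> by_cases hadj : G.Adj i j <;>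
    simp [lapMatrix, degMatrix, adjMatrix_apply, h, hadj]

theorem map_eval_charpoly_lapMatrix {R S : Type*} [CommRing R] [CommRing S] (f : R →+* S)
    (r : R) : f ((G.lapMatrix R).charpoly.eval r) = (G.lapMatrix S).charpoly.eval (f r) := by
  rw [← eval_map_apply, ← charpoly_map, lapMatrix_map]

theorem lapMatrix_mulVec_apply_eq_sum_sub {R : Type*} [Ring R] (x : V → R) (v : V) :
    (G.lapMatrix R *ᵥ x) v = ∑ u ∈ G.neighborFinset v, (x v - x u) := by
  rw [lapMatrix_mulVec_apply, sum_sub_distrib, sum_const, card_neighborFinset_eq_degree,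
    nsmul_eq_mul]

theorem even_degree_cutGraph_of_lapMatrix_mulVec_eq_zero {x : V → ZMod 2}
    (hx : G.lapMatrix (ZMod 2) *ᵥ x = 0) (v : V) : Even ((G.cutGraph x).degree v) := by
  have hcut : (G.cutGraph x).neighborFinset v = {u ∈ G.neighborFinset v | x v ≠ x u} := by
    ext u
    simp
  have hsum := congr_fun hx v
  rw [lapMatrix_mulVec_apply_eq_sum_sub, Pi.zero_apply] at hsum
  rw [← ZMod.natCast_eq_zero_iff_even, ← card_neighborFinset_eq_degree, hcut, ← hsum,
    card_filter, Nat.cast_sum]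
  refine sum_congr rfl fun u _ => ?_
  generalize x v = a
  generalize x u = b
  revert a b
  decide

theorem eq_of_lapMatrix_zmod_two_mulVec_eq_zero (hconn : G.Connected)
    (hcyc : ∀ (v : V) (c : G.Walk v v), c.IsCycle → Odd c.length) {x : V → ZMod 2}
    (hx : G.lapMatrix (ZMod 2) *ᵥ x = 0) (u w : V) : x u = x w := by
  have hcut := (isAcyclic_cutGraph hcyc x).eq_bot_of_forall_even_degree
    (G.even_degree_cutGraph_of_lapMatrix_mulVec_eq_zero hx)
  have hadj (a b : V) (hab : G.Adj a b) : x a = x b := by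
    by_contra hne
    simpa [hcut] using (cutGraph_adj (x := x)).mpr ⟨hab, hne⟩
  obtain ⟨p⟩ := hconn u w
  induction p with
  | nil => rfl
  | cons h _ ih => exact (hadj _ _ h).trans ih

theorem adjugate_lapMatrix_apply_self_ne_zero {K : Type*} [Field K]
    (hker : ∀ x : V → K, G.lapMatrix K *ᵥ x = 0 → ∀ u w, x u = x w) (v : V) :
    (G.lapMatrix K).adjugate v v ≠ 0 := by
  set L := G.lapMatrix K
  rw [adjugate_apply, Ne, ← exists_mulVec_eq_zero_iff]
  rintro ⟨y, hy0, hy⟩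
  have hrow (u : V) : (L.updateRow v (Pi.single v 1) *ᵥ y) u = 0 := by rw [hy]; rfl
  have hyv : y v = 0 := by simpa [mulVec, single_dotProduct] using hrow v
  have hLy_ne (u : V) (hu : u ≠ v) : (L *ᵥ y) u = 0 := by
    simpa [mulVec, updateRow_ne hu] using hrow u
  have hLy_sum : ∑ u, (L *ᵥ y) u = 0 := by
    have hcols : (fun _ => (1 : K)) ᵥ* L = 0 := by
      rw [← mulVec_transpose, (G.isSymm_lapMatrix (R := K)).eq, lapMatrix_mulVec_const_eq_zero]
    have h1 : (fun _ => (1 : K)) ⬝ᵥ (L *ᵥ y) = 0 := by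
      rw [dotProduct_mulVec, hcols, zero_dotProduct]
    simpa [dotProduct] using h1
  have hLy : L *ᵥ y = 0 := by
    ext u
    by_cases hu : u = v
    · rwa [sum_eq_single v (fun u _ hu => hLy_ne u hu) (by simp), ← hu] at hLy_sum
    · exact hLy_ne u hu
  exact hy0 (funext fun u => (hker y hLy u v).trans hyv)

theorem eval_two_charpoly_lapMatrix_zmod_four (hconn : G.Connected)
    (hcyc : ∀ (v : V) (c : G.Walk v v), c.IsCycle → Odd c.length) (hodd : Odd (Fintype.card V)) :
    (G.lapMatrix (ZMod 4)).charpoly.eval 2 = 2 := by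
  obtain ⟨v⟩ := hconn.nonempty
  have hdet : (-G.lapMatrix (ZMod 4)).det = 0 := by
    have h0 := det_eq_zero_of_mulVec_eq_zero_of_mem_nonZeroDivisors
      (G.lapMatrix_mulVec_const_eq_zero (R := ZMod 4)) (i := v) (one_mem _)
    rw [det_neg, h0, mul_zero]
  have hadj (u : V) : (G.lapMatrix (ZMod 2)).adjugate u u = 1 :=
    (by decide : ∀ a : ZMod 2, a ≠ 0 → a = 1) _ (G.adjugate_lapMatrix_apply_self_ne_zero
      (fun _ hx => G.eq_of_lapMatrix_zmod_two_mulVec_eq_zero hconn hcyc hx) u)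
  have htrace : ZMod.castHom (by norm_num : 2 ∣ 4) (ZMod 2)
      (-G.lapMatrix (ZMod 4)).adjugate.trace = 1 := by
    have hneg : -G.lapMatrix (ZMod 2) = G.lapMatrix (ZMod 2) := by
      ext
      exact ZMod.neg_eq_self_mod_two _
    rw [AddMonoidHom.map_trace, ← RingHom.mapMatrix_apply, RingHom.map_adjugate, map_neg,
      RingHom.mapMatrix_apply, lapMatrix_map, hneg, trace]
    simpa [hadj] using ZMod.natCast_eq_one_iff_odd.mpr hodd
  rw [eval_charpoly, scalar_apply, ← smul_one_eq_diagonal, sub_eq_neg_add,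
    det_add_smul_one_of_mul_self_eq_zero _ (by decide), hdet, zero_add]
  generalize (-G.lapMatrix (ZMod 4)).adjugate.trace = t at htrace
  revert t
  decide

theorem eval_two_charpoly_lapMatrix_ne_zero (hconn : G.Connected)
    (hcyc : ∀ (v : V) (c : G.Walk v v), c.IsCycle → Odd c.length) (hodd : Odd (Fintype.card V)) :
    (G.lapMatrix ℝ).charpoly.eval 2 ≠ 0 := by
  have hℤ : (G.lapMatrix ℤ).charpoly.eval 2 ≠ 0 := fun h => by
    have := G.map_eval_charpoly_lapMatrix (Int.castRingHom (ZMod 4)) 2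
    rw [h, map_zero, map_ofNat, eval_two_charpoly_lapMatrix_zmod_four G hconn hcyc hodd] at this
    exact absurd this (by decide)
  have hℝ := G.map_eval_charpoly_lapMatrix (Int.castRingHom ℝ) 2
  rw [map_ofNat, Int.coe_castRingHom] at hℝ
  rwa [← hℝ, Int.cast_ne_zero]

theorem lapMatrix_mulVec_eq_of_le {R : Type*} [Ring R] {H : SimpleGraph V} [DecidableRel H.Adj]
    (hHG : H ≤ G) {x : V → R} (hx : ∀ a b, G.Adj a b → ¬ H.Adj a b → x a = x b) :
    H.lapMatrix R *ᵥ x = G.lapMatrix R *ᵥ x := by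
  ext v
  rw [lapMatrix_mulVec_apply_eq_sum_sub, lapMatrix_mulVec_apply_eq_sum_sub]
  refine sum_subset (fun u hu => ?_) (fun u hu hnu => ?_)
  · simpa using hHG (by simpa using hu)
  · rw [hx v u (by simpa using hu) (by simpa using hnu), sub_self]

theorem finrank_eigenspace_lapMatrix_le {K : Type*} [Field K] {H : SimpleGraph V}
    [DecidableRel H.Adj] (hHG : H ≤ G) (μ : K) :
    finrank K (End.eigenspace (toLin' (G.lapMatrix K)) μ) ≤
      #(G.edgeFinset \ H.edgeFinset) + finrank K (End.eigenspace (toLin' (H.lapMatrix K)) μ) := by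
  set S := G.edgeFinset \ H.edgeFinset
  set EG := End.eigenspace (toLin' (G.lapMatrix K)) μ
  -- one constraint `x a = x b` for each edge `s(a, b)` of `G` missing from `H`
  let φ : (V → K) →ₗ[K] (S → K) :=
    LinearMap.pi fun e => LinearMap.proj (R := K) (φ := fun _ : V => K) (Quot.out e.1).1 -
      LinearMap.proj (Quot.out e.1).2
  have hker : EG ⊓ LinearMap.ker φ ≤ End.eigenspace (toLin' (H.lapMatrix K)) μ := by
    intro x ⟨hxG, hxφ⟩
    rw [SetLike.mem_coe] at hxG
    rw [End.mem_eigenspace_iff, toLin'_apply] at hxG ⊢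
    refine (G.lapMatrix_mulVec_eq_of_le hHG fun a b hab hnab => ?_).trans hxG
    have hout := congr_fun (LinearMap.mem_ker.mp hxφ) ⟨s(a, b), by simp [S, hab, hnab]⟩
    simp only [φ, LinearMap.pi_apply, LinearMap.sub_apply, LinearMap.proj_apply, Pi.zero_apply,
      sub_eq_zero] at hout
    have hends : s((Quot.out s(a, b)).1, (Quot.out s(a, b)).2) = s(a, b) := Quot.out_eq _
    rcases Sym2.eq_iff.mp hends with ⟨h1, h2⟩ | ⟨h1, h2⟩
    · rwa [h1, h2] at hout
    · rw [h1, h2] at hout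
      exact hout.symm
  have hrange : finrank K (LinearMap.range φ) ≤ #S := by
    simpa using (LinearMap.range φ).finrank_le
  have hsum := Submodule.finrank_sup_add_finrank_inf_eq EG (LinearMap.ker φ)
  have hsup := (EG ⊔ LinearMap.ker φ).finrank_le
  have hrank := φ.finrank_range_add_finrank_ker
  have hinf := Submodule.finrank_mono hker
  simp only [finrank_fintype_fun_eq_card] at hsup hrank
  omega

theorem rootMultiplicity_charpoly_lapMatrix_le {H : SimpleGraph V} [DecidableRel H.Adj]
    (hHG : H ≤ G) {μ : ℝ} (hμ : (H.lapMatrix ℝ).charpoly.eval μ ≠ 0) :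
    (G.lapMatrix ℝ).charpoly.rootMultiplicity μ ≤ #(G.edgeFinset \ H.edgeFinset) := by
  have hH := (H.isHermitian_lapMatrix ℝ).finrank_eigenspace_toLin' μ
  rw [rootMultiplicity_eq_zero hμ] at hH
  rw [← (G.isHermitian_lapMatrix ℝ).finrank_eigenspace_toLin']
  simpa [hH] using G.finrank_eigenspace_lapMatrix_le hHG μ

end SimpleGraph

/-- For a bicyclic graph `G` of odd order, the multiplicity of the Laplacian
eigenvalue `2` is at most `2`; moreover, if every cycle of `G` has odd length (in particular
both cycle lengths `g₁, g₂` are odd), then `2` is not a Laplacian eigenvalue of `G`. -/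
theorem bicyclic_odd_order_multiplicity_two
    {V : Type*} [Fintype V] [DecidableEq V]
    (G : SimpleGraph V) (hconn : G.Connected)
    (hbi : G.edgeFinset.card = Fintype.card V + 1)
    (hodd : Odd (Fintype.card V)) :
    (Matrix.charpoly (G.lapMatrix ℝ)).rootMultiplicity 2 ≤ 2 ∧
      ((∀ (v : V) (w : G.Walk v v), w.IsCycle → Odd w.length) →
        (Matrix.charpoly (G.lapMatrix ℝ)).rootMultiplicity 2 = 0) := by
  refine ⟨?_, fun hcyc =>
    rootMultiplicity_eq_zero (G.eval_two_charpoly_lapMatrix_ne_zero hconn hcyc hodd)⟩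
  obtain ⟨T, hTG, hT⟩ := hconn.exists_isTree_le
  have hT2 : (T.lapMatrix ℝ).charpoly.eval 2 ≠ 0 :=
    T.eval_two_charpoly_lapMatrix_ne_zero hT.connected (fun _ c hc => (hT.isAcyclic c hc).elim)
      hodd
  calc _ ≤ #(G.edgeFinset \ T.edgeFinset) := G.rootMultiplicity_charpoly_lapMatrix_le hTG hT2
    _ = 2 := by
      have := hT.card_edgeFinset
      rw [card_sdiff_of_subset (SimpleGraph.edgeFinset_mono hTG)]
      omega
end

section
/- Let G₁ and G₂ be Laplacian-eigenvalue-2 graphs with eigenvectors X and Y respectively (L(G₁)X = 2X, L(G₂)Y = 2Y), and let G = G₁ ⊙ G₂ be joined by an edge uv with u ∈ V(G₁), v ∈ V(G₂). If x(u) ≠ 0 and y(v) ≠ 0, then the vector Z defined by Z = X on V(G₁) and Z = (x(u)/y(v))·Y on V(G₂) satisfies L(G)Z = 2Z; in particular 2 is an eigenvalue of L(G). -/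
/-!
On a vector `Sum.elim x y`, the Laplacian of `G₁ ⊙ G₂` acts as `L(G₁) x` on `V₁` and `L(G₂) y`
on `V₂`, corrected only at the ends of the bridge by `± (x u - y v)`. Rescaling `Y` so that it
agrees with `X` across the bridge makes the correction vanish, so the two eigenvector equations
glue to one.
-/

open scoped Classical

/-- The one-edge connection `G₁ ⊙ G₂`. -/
def oneEdgeConn {V₁ V₂ : Type*} (G₁ : SimpleGraph V₁) (G₂ : SimpleGraph V₂)
    (u : V₁) (v : V₂) : SimpleGraph (V₁ ⊕ V₂) :=
  SimpleGraph.fromRel (fun x y =>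
    match x, y with
    | Sum.inl a, Sum.inl b => G₁.Adj a b
    | Sum.inr a, Sum.inr b => G₂.Adj a b
    | Sum.inl a, Sum.inr b => a = u ∧ b = v
    | Sum.inr _, Sum.inl _ => False)

open scoped Matrix

namespace SimpleGraph

theorem lapMatrix_mulVec_apply_eq_sum {V R : Type*} [Fintype V] [DecidableEq V] [NonAssocRing R]
    (G : SimpleGraph V) [DecidableRel G.Adj] (x : V → R) (w : V) :
    (G.lapMatrix R *ᵥ x) w = ∑ w', if G.Adj w w' then x w - x w' else 0 := by
  rw [lapMatrix_mulVec_apply, degree_eq_sum_if_adj, Finset.sum_mul, neighborFinset_eq_filter,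
    Finset.sum_filter, ← Finset.sum_sub_distrib]
  refine Finset.sum_congr rfl fun w' _ => ?_
  split_ifs <;> simp

end SimpleGraph

section OneEdgeConn

variable {V₁ V₂ : Type*} (G₁ : SimpleGraph V₁) (G₂ : SimpleGraph V₂) (u : V₁) (v : V₂)

@[simp]
theorem oneEdgeConn_adj_inl_inl (a b : V₁) :
    (oneEdgeConn G₁ G₂ u v).Adj (.inl a) (.inl b) ↔ G₁.Adj a b := by
  simpa [oneEdgeConn, G₁.adj_comm b a] using G₁.ne_of_adj

@[simp]
theorem oneEdgeConn_adj_inr_inr (a b : V₂) :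
    (oneEdgeConn G₁ G₂ u v).Adj (.inr a) (.inr b) ↔ G₂.Adj a b := by
  simpa [oneEdgeConn, G₂.adj_comm b a] using G₂.ne_of_adj

@[simp]
theorem oneEdgeConn_adj_inl_inr (a : V₁) (b : V₂) :
    (oneEdgeConn G₁ G₂ u v).Adj (.inl a) (.inr b) ↔ a = u ∧ b = v := by
  simp [oneEdgeConn]

@[simp]
theorem oneEdgeConn_adj_inr_inl (a : V₂) (b : V₁) :
    (oneEdgeConn G₁ G₂ u v).Adj (.inr a) (.inl b) ↔ b = u ∧ a = v := by
  simp [oneEdgeConn]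

variable {R : Type*} [Fintype V₁] [Fintype V₂] [DecidableEq V₁] [DecidableEq V₂] [NonAssocRing R]
  [DecidableRel (oneEdgeConn G₁ G₂ u v).Adj] (x : V₁ → R) (y : V₂ → R)

theorem lapMatrix_oneEdgeConn_mulVec_inl [DecidableRel G₁.Adj] (a : V₁) :
    ((oneEdgeConn G₁ G₂ u v).lapMatrix R *ᵥ Sum.elim x y) (.inl a) =
      (G₁.lapMatrix R *ᵥ x) a + if a = u then x u - y v else 0 := by
  by_cases ha : a = u
  · subst ha
    simp [SimpleGraph.lapMatrix_mulVec_apply_eq_sum, Fintype.sum_sum_type]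
  · simp [SimpleGraph.lapMatrix_mulVec_apply_eq_sum, Fintype.sum_sum_type, ha]

theorem lapMatrix_oneEdgeConn_mulVec_inr [DecidableRel G₂.Adj] (b : V₂) :
    ((oneEdgeConn G₁ G₂ u v).lapMatrix R *ᵥ Sum.elim x y) (.inr b) =
      (G₂.lapMatrix R *ᵥ y) b + if b = v then y v - x u else 0 := by
  by_cases hb : b = v
  · subst hb
    simp [SimpleGraph.lapMatrix_mulVec_apply_eq_sum, Fintype.sum_sum_type, add_comm]
  · simp [SimpleGraph.lapMatrix_mulVec_apply_eq_sum, Fintype.sum_sum_type, hb]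

theorem lapMatrix_oneEdgeConn_mulVec_of_eq [DecidableRel G₁.Adj] [DecidableRel G₂.Adj]
    (hxy : x u = y v) :
    (oneEdgeConn G₁ G₂ u v).lapMatrix R *ᵥ Sum.elim x y =
      Sum.elim (G₁.lapMatrix R *ᵥ x) (G₂.lapMatrix R *ᵥ y) := by
  ext (a | b)
  · simp [lapMatrix_oneEdgeConn_mulVec_inl, hxy]
  · simp [lapMatrix_oneEdgeConn_mulVec_inr, hxy]

end OneEdgeConn

theorem oneEdgeConn_eigenvector_glue_general
    {V₁ V₂ : Type*} [Fintype V₁] [Fintype V₂] [DecidableEq V₁] [DecidableEq V₂]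
    (G₁ : SimpleGraph V₁) (G₂ : SimpleGraph V₂) (u : V₁) (v : V₂)
    (X : V₁ → ℝ) (Y : V₂ → ℝ)
    (hX2 : (G₁.lapMatrix ℝ).mulVec X = (2 : ℝ) • X)
    (hY2 : (G₂.lapMatrix ℝ).mulVec Y = (2 : ℝ) • Y)
    (hXu : X u ≠ 0) (hYv : Y v ≠ 0) :
    (((oneEdgeConn G₁ G₂ u v).lapMatrix ℝ).mulVec
        (Sum.elim X (fun b => (X u / Y v) * Y b)) =
      (2 : ℝ) • Sum.elim X (fun b => (X u / Y v) * Y b)) ∧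
    ∃ Z : (V₁ ⊕ V₂) → ℝ, Z ≠ 0 ∧
      ((oneEdgeConn G₁ G₂ u v).lapMatrix ℝ).mulVec Z = (2 : ℝ) • Z := by
  set k := X u / Y v
  have hglue : X u = (k • Y) v := (div_mul_cancel₀ (X u) hYv).symm
  have heigen : (oneEdgeConn G₁ G₂ u v).lapMatrix ℝ *ᵥ Sum.elim X (k • Y) =
      (2 : ℝ) • Sum.elim X (k • Y) := by
    rw [lapMatrix_oneEdgeConn_mulVec_of_eq G₁ G₂ u v X (k • Y) hglue, Matrix.mulVec_smul, hX2, hY2,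
      smul_comm]
    ext (a | b) <;> rfl
  exact ⟨heigen, _, fun h => hXu (congrFun h (.inl u)), heigen⟩

/-- If `X`, `Y` are eigenvectors of `L(G₁)`, `L(G₂)` for the eigenvalue `2`
with `X u ≠ 0` and `Y v ≠ 0`, then `Z = (X, (X u / Y v)·Y)` is an eigenvector of
`L(G₁ ⊙ G₂)` for the eigenvalue `2`; in particular `2` is an eigenvalue of `L(G₁ ⊙ G₂)`. -/
theorem oneEdgeConn_eigenvector_glue
    {V₁ V₂ : Type*} [Fintype V₁] [Fintype V₂] [DecidableEq V₁] [DecidableEq V₂]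
    (G₁ : SimpleGraph V₁) (G₂ : SimpleGraph V₂) (u : V₁) (v : V₂)
    (X : V₁ → ℝ) (Y : V₂ → ℝ) (hX : X ≠ 0) (hY : Y ≠ 0)
    (hX2 : (G₁.lapMatrix ℝ).mulVec X = (2 : ℝ) • X)
    (hY2 : (G₂.lapMatrix ℝ).mulVec Y = (2 : ℝ) • Y)
    (hXu : X u ≠ 0) (hYv : Y v ≠ 0) :
    (((oneEdgeConn G₁ G₂ u v).lapMatrix ℝ).mulVec
        (Sum.elim X (fun b => (X u / Y v) * Y b)) =
      (2 : ℝ) • Sum.elim X (fun b => (X u / Y v) * Y b)) ∧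
    ∃ Z : (V₁ ⊕ V₂) → ℝ, Z ≠ 0 ∧
      ((oneEdgeConn G₁ G₂ u v).lapMatrix ℝ).mulVec Z = (2 : ℝ) • Z :=
  oneEdgeConn_eigenvector_glue_general G₁ G₂ u v X Y hX2 hY2 hXu hYv
end
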